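/- arXiv:2209.13424 — 3 statements merged into one kernel-verified Lean document; each statement's English description precedes it below -/
import Mathlib

section
/- Let Λ < π² be a real number and let f : [0,1] → ℝ be continuous on [0,1], twice continuously differentiable on (0,1), and nonnegative, and assume f''(t) + Λ f(t) ≥ 0 for every t ∈ (0,1). Then for all t, s₀, s₁ ∈ [0,1], f((1−t)s₀ + t s₁) ≤ σ_Λ^{(1−t)}(|s₀−s₁|) f(s₀) + σ_Λ^{(t)}(|s₀−s₁|) f(s₁). -/
/-!
On a subinterval `[s₀, s₁]` of length `θ` we have `Λ θ² < π²`, so there is a weight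
`φ x = cos (r (x - m))` (`m` the midpoint), positive on `[s₀, s₁]`, with `Λ < r²`. This gives the
maximum principle for `w'' + Λ w`: if `w / φ` had a positive interior maximum `M`, then `w - M φ`
would have a local maximum there, forcing `w'' + r² M φ ≤ 0`, against `w'' + Λ M φ ≥ 0`.
The right-hand side of the inequality, as a function of the point `(1 - t) s₀ + t s₁`, solves
`h'' + Λ h = 0` with boundary values `f s₀` and `f s₁`, so the maximum principle applied to `f - h`
gives the claim.
-/

open Real Set Filter Topology

/-- Distortion coefficient `σ_Λ^{(t)}(θ)`. -/
noncomputable def sigmaCoeff (Λ t θ : ℝ) : ℝ :=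
  if Λ * θ ^ 2 = 0 then t
  else if 0 < Λ * θ ^ 2 then
    Real.sin (t * (θ * Real.sqrt Λ)) / Real.sin (θ * Real.sqrt Λ)
  else
    Real.sinh (t * (θ * Real.sqrt (-Λ))) / Real.sinh (θ * Real.sqrt (-Λ))

theorem IsLocalMax.nonpos_of_hasDerivAt {v v' : ℝ → ℝ} {x₀ b : ℝ} (hmax : IsLocalMax v x₀)
    (hv : ∀ᶠ x in 𝓝 x₀, HasDerivAt v (v' x) x) (hv' : HasDerivAt v' b x₀) : b ≤ 0 := by
  by_contra! hb
  -- a positive second derivative makes `x₀` a local minimum too, so `v` is locally constant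
  have hderiv : deriv v =ᶠ[𝓝 x₀] v' := hv.mono fun x hx => hx.deriv
  have hmin : IsLocalMin v x₀ :=
    isLocalMin_of_deriv_deriv_pos (by rwa [hderiv.deriv_eq, hv'.deriv]) hmax.deriv_eq_zero
      hv.self_of_nhds.continuousAt
  have hconst : v =ᶠ[𝓝 x₀] fun _ => v x₀ := (hmax.and hmin).mono fun x hx => le_antisymm hx.1 hx.2
  have hv'_zero : v' =ᶠ[𝓝 x₀] fun _ => 0 := by
    filter_upwards [hconst.eventuallyEq_nhds, hv] with x hx hvx
    rw [← hvx.deriv, hx.deriv_eq, deriv_const]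
  exact hb.ne' ((hv'.congr_of_eventuallyEq hv'_zero.symm).unique (hasDerivAt_const x₀ 0))

theorem exists_sq_gt_and_cos_pos {μ a b : ℝ} (hab : a < b) (hμ : μ * (b - a) ^ 2 < π ^ 2) :
    ∃ r, μ < r ^ 2 ∧ ∀ x ∈ Icc a b, 0 < cos (r * (x - (a + b) / 2)) := by
  have hL : 0 < (b - a) ^ 2 := by positivity
  obtain ⟨ρ, hμρ, hρ⟩ : ∃ ρ, max μ 0 < ρ ∧ ρ < π ^ 2 / (b - a) ^ 2 := by
    refine exists_between ((lt_div_iff₀ hL).2 ?_)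
    rcases le_total μ 0 with h | h
    · simp [h, pi_pos]
    · simpa [h] using hμ
  have hρ0 : 0 < ρ := (le_max_right μ 0).trans_lt hμρ
  refine ⟨√ρ, by rw [sq_sqrt hρ0.le]; exact (le_max_left μ 0).trans_lt hμρ, fun x hx => ?_⟩
  have hrL : √ρ * (b - a) < π := by
    rw [lt_div_iff₀ hL] at hρ
    have := sq_sqrt hρ0.le
    nlinarith [sqrt_nonneg ρ, pi_pos]
  apply cos_pos_of_mem_Ioo
  constructor <;> nlinarith [hx.1, hx.2, sqrt_nonneg ρ]

theorem nonpos_of_deriv2_add_mul_nonneg {μ a b : ℝ} (hμ : μ * (b - a) ^ 2 < π ^ 2)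
    {w w' w'' : ℝ → ℝ} (hw : ContinuousOn w (Icc a b))
    (hw' : ∀ x ∈ Ioo a b, HasDerivAt w (w' x) x) (hw'' : ∀ x ∈ Ioo a b, HasDerivAt w' (w'' x) x)
    (hode : ∀ x ∈ Ioo a b, 0 ≤ w'' x + μ * w x) (ha : w a ≤ 0) (hb : w b ≤ 0) :
    ∀ x ∈ Icc a b, w x ≤ 0 := by
  intro x hx
  rcases le_or_gt b a with hba | hab
  · obtain rfl : x = a := le_antisymm (hx.2.trans hba) hx.1
    exact ha
  obtain ⟨r, hμr, hφpos⟩ := exists_sq_gt_and_cos_pos hab hμ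
  set φ : ℝ → ℝ := fun x => cos (r * (x - (a + b) / 2))
  have hlin : ∀ x, HasDerivAt (fun x => r * (x - (a + b) / 2)) r x := fun x => by
    simpa using ((hasDerivAt_id x).sub_const ((a + b) / 2)).const_mul r
  have hφ' : ∀ x, HasDerivAt φ (-sin (r * (x - (a + b) / 2)) * r) x := fun x => (hlin x).cos
  have hφ'' : ∀ x, HasDerivAt (fun x => -sin (r * (x - (a + b) / 2)) * r) (-r ^ 2 * φ x) x :=
    fun x => ((hlin x).sin.neg.mul_const r).congr_deriv (by simp only [φ]; ring)
  obtain ⟨x₀, hx₀, hmax⟩ := isCompact_Icc.exists_isMaxOn (nonempty_Icc.2 hab.le)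
    (hw.div (by fun_prop) fun x hx => (hφpos x hx).ne')
  obtain ⟨M, hM_def⟩ : ∃ M, M = w x₀ / φ x₀ := ⟨_, rfl⟩
  have hwM : ∀ x ∈ Icc a b, w x ≤ M * φ x := fun x hx =>
    (div_le_iff₀ (hφpos x hx)).1 (hM_def ▸ hmax hx)
  suffices M ≤ 0 from (hwM x hx).trans (mul_nonpos_of_nonpos_of_nonneg this (hφpos x hx).le)
  by_contra! hM
  have hend : ∀ y ∈ Icc a b, w y ≤ 0 → y ≠ x₀ := by
    rintro y hy hwy rfl
    exact hM.not_ge (hM_def ▸ div_nonpos_of_nonpos_of_nonneg hwy (hφpos y hy).le)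
  have hx₀' : x₀ ∈ Ioo a b :=
    ⟨hx₀.1.lt_of_ne (hend a (left_mem_Icc.2 hab.le) ha),
      hx₀.2.lt_of_ne' (hend b (right_mem_Icc.2 hab.le) hb)⟩
  have hwx₀ : w x₀ = M * φ x₀ := by rw [hM_def, div_mul_cancel₀ _ (hφpos x₀ hx₀).ne']
  have hlocmax : IsLocalMax (fun x => w x - M * φ x) x₀ := by
    filter_upwards [Icc_mem_nhds hx₀'.1 hx₀'.2] with x hx
    linarith [hwM x hx]
  have hv''_nonpos := hlocmax.nonpos_of_hasDerivAt
    (eventually_of_mem (Ioo_mem_nhds hx₀'.1 hx₀'.2) fun x hx =>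
      (hw' x hx).sub ((hφ' x).const_mul M))
    ((hw'' x₀ hx₀').sub ((hφ'' x₀).const_mul M))
  have := hode x₀ hx₀'
  rw [hwx₀] at this
  nlinarith [mul_pos (mul_pos hM (hφpos x₀ hx₀)) (sub_pos.2 hμr)]

theorem le_of_deriv2_add_mul_le {μ a b : ℝ} (hμ : μ * (b - a) ^ 2 < π ^ 2)
    {g g' g'' h h' h'' : ℝ → ℝ}
    (hg : ContinuousOn g (Icc a b)) (hg' : ∀ x ∈ Ioo a b, HasDerivAt g (g' x) x)
    (hg'' : ∀ x ∈ Ioo a b, HasDerivAt g' (g'' x) x)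
    (hh : ContinuousOn h (Icc a b)) (hh' : ∀ x ∈ Ioo a b, HasDerivAt h (h' x) x)
    (hh'' : ∀ x ∈ Ioo a b, HasDerivAt h' (h'' x) x)
    (hode : ∀ x ∈ Ioo a b, h'' x + μ * h x ≤ g'' x + μ * g x) (ha : g a ≤ h a) (hb : g b ≤ h b) :
    ∀ x ∈ Icc a b, g x ≤ h x := fun x hx =>
  sub_nonpos.1 <| nonpos_of_deriv2_add_mul_nonneg hμ (hg.sub hh)
    (fun x hx => (hg' x hx).sub (hh' x hx)) (fun x hx => (hg'' x hx).sub (hh'' x hx))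
    (fun x hx => by simp only [Pi.sub_apply]; linarith [hode x hx])
    (sub_nonpos.2 ha) (sub_nonpos.2 hb) x hx

theorem sq_mul_sqrt {Λ : ℝ} (hΛ : 0 ≤ Λ) (θ : ℝ) : (θ * √Λ) ^ 2 = Λ * θ ^ 2 := by
  rw [mul_pow, sq_sqrt hΛ, mul_comm]

theorem sigmaCoeff_angle_zero (Λ t : ℝ) : sigmaCoeff Λ t 0 = t := by
  simp [sigmaCoeff]

theorem sigmaCoeff_time_zero (Λ θ : ℝ) : sigmaCoeff Λ 0 θ = 0 := by
  unfold sigmaCoeff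
  split_ifs <;> simp

theorem sigmaCoeff_time_one {Λ θ : ℝ} (hθ : Λ * θ ^ 2 < π ^ 2) : sigmaCoeff Λ 1 θ = 1 := by
  unfold sigmaCoeff
  split_ifs with hzero hpos
  · rfl
  · have hΛ : 0 ≤ Λ := (pos_of_mul_pos_left hpos (sq_nonneg θ)).le
    have hc := sq_mul_sqrt hΛ θ
    obtain ⟨hlo, hhi⟩ := abs_lt_of_sq_lt_sq' (hc ▸ hθ) pi_pos.le
    have hne : θ * √Λ ≠ 0 := fun h => hpos.ne' (by rw [← hc, h]; ring)
    rw [one_mul, div_self ((sin_eq_zero_iff_of_lt_of_lt hlo hhi).not.2 hne)]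
  · have hΛ : 0 < -Λ := by
      have := lt_of_le_of_ne (not_lt.1 hpos) hzero
      nlinarith [sq_nonneg θ]
    have hne : θ * √(-Λ) ≠ 0 :=
      mul_ne_zero (by rintro rfl; simp at hzero) (sqrt_pos.2 hΛ).ne'
    rw [one_mul, div_self (sinh_ne_zero.2 hne)]

theorem exists_hasDerivAt_sigmaCoeff (Λ θ : ℝ) :
    ∃ σ' : ℝ → ℝ, ∀ τ, HasDerivAt (sigmaCoeff Λ · θ) (σ' τ) τ ∧
      HasDerivAt σ' (-(Λ * θ ^ 2) * sigmaCoeff Λ τ θ) τ := by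
  by_cases hzero : Λ * θ ^ 2 = 0
  · simp only [sigmaCoeff, if_pos hzero]
    exact ⟨fun _ => 1, fun τ => ⟨hasDerivAt_id' τ, by simpa [hzero] using hasDerivAt_const τ 1⟩⟩
  by_cases hpos : 0 < Λ * θ ^ 2
  · simp only [sigmaCoeff, if_neg hzero, if_pos hpos]
    have hc := sq_mul_sqrt (pos_of_mul_pos_left hpos (sq_nonneg θ)).le θ
    set c := θ * √Λ
    refine ⟨fun τ => cos (τ * c) * c / sin c, fun τ => ⟨?_, ?_⟩⟩
    · exact (hasDerivAt_mul_const c).sin.div_const _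
    · exact (((hasDerivAt_mul_const c).cos.mul_const c).div_const _).congr_deriv
        (by linear_combination -(sin (τ * c) / sin c) * hc)
  · simp only [sigmaCoeff, if_neg hzero, if_neg hpos]
    have hc := sq_mul_sqrt (neg_nonneg.2 (nonpos_of_mul_nonpos_left (not_lt.1 hpos)
      (sq_pos_of_ne_zero (by rintro rfl; simp at hzero)))) θ
    set c := θ * √(-Λ)
    refine ⟨fun τ => cosh (τ * c) * c / sinh c, fun τ => ⟨?_, ?_⟩⟩
    · exact (hasDerivAt_mul_const c).sinh.div_const _
    · exact (((hasDerivAt_mul_const c).cosh.mul_const c).div_const _).congr_deriv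
        (by linear_combination sinh (τ * c) / sinh c * hc)

theorem exists_hasDerivAt_sigmaCoeff_comp (Λ θ : ℝ) {u : ℝ → ℝ} {α : ℝ}
    (hu : ∀ x, HasDerivAt u α x) :
    ∃ σ' : ℝ → ℝ, ∀ x, HasDerivAt (fun x => sigmaCoeff Λ (u x) θ) (σ' x) x ∧
      HasDerivAt σ' (-(Λ * θ ^ 2 * α ^ 2) * sigmaCoeff Λ (u x) θ) x := by
  obtain ⟨σ', hσ⟩ := exists_hasDerivAt_sigmaCoeff Λ θ
  refine ⟨fun x => σ' (u x) * α, fun x => ⟨(hσ _).1.comp x (hu x), ?_⟩⟩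
  exact (((hσ _).2.comp x (hu x)).mul_const α).congr_deriv (by ring)

theorem le_sigmaCoeff_interpolation {Λ s₀ s₁ : ℝ} (hs : s₀ < s₁)
    (hΛ : Λ * (s₁ - s₀) ^ 2 < π ^ 2) {f f' f'' : ℝ → ℝ} (hf : ContinuousOn f (Icc s₀ s₁))
    (hf' : ∀ x ∈ Ioo s₀ s₁, HasDerivAt f (f' x) x)
    (hf'' : ∀ x ∈ Ioo s₀ s₁, HasDerivAt f' (f'' x) x)
    (hode : ∀ x ∈ Ioo s₀ s₁, 0 ≤ f'' x + Λ * f x) {t : ℝ} (ht : t ∈ Icc 0 1) :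
    f ((1 - t) * s₀ + t * s₁) ≤
      sigmaCoeff Λ (1 - t) (s₁ - s₀) * f s₀ + sigmaCoeff Λ t (s₁ - s₀) * f s₁ := by
  have hθ : s₁ - s₀ ≠ 0 := (sub_pos.2 hs).ne'
  obtain ⟨σ₀', hσ₀⟩ := exists_hasDerivAt_sigmaCoeff_comp Λ (s₁ - s₀) fun x =>
    ((hasDerivAt_id' x).const_sub s₁).div_const (s₁ - s₀)
  obtain ⟨σ₁', hσ₁⟩ := exists_hasDerivAt_sigmaCoeff_comp Λ (s₁ - s₀) fun x =>
    ((hasDerivAt_id' x).sub_const s₀).div_const (s₁ - s₀)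
  set h : ℝ → ℝ := fun x => sigmaCoeff Λ ((s₁ - x) / (s₁ - s₀)) (s₁ - s₀) * f s₀ +
    sigmaCoeff Λ ((x - s₀) / (s₁ - s₀)) (s₁ - s₀) * f s₁
  have hh' : ∀ x, HasDerivAt h (σ₀' x * f s₀ + σ₁' x * f s₁) x := fun x =>
    ((hσ₀ x).1.mul_const _).add ((hσ₁ x).1.mul_const _)
  have hh'' : ∀ x, HasDerivAt (fun x => σ₀' x * f s₀ + σ₁' x * f s₁) (-Λ * h x) x := fun x =>
    (((hσ₀ x).2.mul_const _).add ((hσ₁ x).2.mul_const _)).congr_deriv (by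
      have hsq : (s₁ - s₀) ^ 2 * (1 / (s₁ - s₀)) ^ 2 = 1 := by field_simp
      linear_combination (-(Λ * sigmaCoeff Λ ((s₁ - x) / (s₁ - s₀)) (s₁ - s₀) * f s₀) -
        Λ * sigmaCoeff Λ ((x - s₀) / (s₁ - s₀)) (s₁ - s₀) * f s₁) * hsq)
  have hcompare := le_of_deriv2_add_mul_le hΛ hf hf' hf''
    (HasDerivAt.continuousOn fun x _ => hh' x) (fun x _ => hh' x) (fun x _ => hh'' x)
    (fun x hx => by linarith [hode x hx]) ?_ ?_ ((1 - t) * s₀ + t * s₁) ?_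
  · have harg₀ : (s₁ - ((1 - t) * s₀ + t * s₁)) / (s₁ - s₀) = 1 - t := by field_simp; ring
    have harg₁ : ((1 - t) * s₀ + t * s₁ - s₀) / (s₁ - s₀) = t := by field_simp; ring
    simpa only [h, harg₀, harg₁] using hcompare
  · simp [h, div_self hθ, sigmaCoeff_time_zero, sigmaCoeff_time_one hΛ]
  · simp [h, div_self hθ, sigmaCoeff_time_zero, sigmaCoeff_time_one hΛ]
  · constructor <;> nlinarith [ht.1, ht.2]

theorem stmt_1_general (Λ : ℝ) (hΛ : Λ < Real.pi ^ 2)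
    (f f' f'' : ℝ → ℝ)
    (hf : ContinuousOn f (Set.Icc 0 1))
    (hf' : ∀ t ∈ Set.Ioo (0 : ℝ) 1, HasDerivAt f (f' t) t)
    (hf'' : ∀ t ∈ Set.Ioo (0 : ℝ) 1, HasDerivAt f' (f'' t) t)
    (hode : ∀ t ∈ Set.Ioo (0 : ℝ) 1, 0 ≤ f'' t + Λ * f t) :
    ∀ t ∈ Set.Icc (0 : ℝ) 1, ∀ s₀ ∈ Set.Icc (0 : ℝ) 1, ∀ s₁ ∈ Set.Icc (0 : ℝ) 1,
      f ((1 - t) * s₀ + t * s₁) ≤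
        sigmaCoeff Λ (1 - t) |s₀ - s₁| * f s₀ + sigmaCoeff Λ t |s₀ - s₁| * f s₁ := by
  have hinterp : ∀ t ∈ Icc (0 : ℝ) 1, ∀ a ∈ Icc (0 : ℝ) 1, ∀ b ∈ Icc (0 : ℝ) 1, a < b →
      f ((1 - t) * a + t * b) ≤
        sigmaCoeff Λ (1 - t) (b - a) * f a + sigmaCoeff Λ t (b - a) * f b := by
    intro t ht a ha b hb hab
    have hsub : Ioo a b ⊆ Ioo 0 1 := Ioo_subset_Ioo ha.1 hb.2
    refine le_sigmaCoeff_interpolation hab ?_ (hf.mono (Icc_subset_Icc ha.1 hb.2))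
      (fun x hx => hf' x (hsub hx)) (fun x hx => hf'' x (hsub hx)) (fun x hx => hode x (hsub hx)) ht
    have hsq : (b - a) ^ 2 ≤ 1 := by nlinarith [ha.1, hb.2]
    rcases le_or_gt 0 Λ with hΛ0 | hΛ0 <;> nlinarith [sq_nonneg (b - a), pi_pos]
  intro t ht s₀ hs₀ s₁ hs₁
  rcases lt_trichotomy s₀ s₁ with hlt | rfl | hgt
  · rw [abs_sub_comm, abs_of_pos (sub_pos.2 hlt)]
    exact hinterp t ht s₀ hs₀ s₁ hs₁ hlt
  · rw [sub_self, abs_zero, sigmaCoeff_angle_zero, sigmaCoeff_angle_zero, ← add_mul, ← add_mul,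
      sub_add_cancel, one_mul, one_mul]
  · have := hinterp (1 - t) ⟨by linarith [ht.2], by linarith [ht.1]⟩ s₁ hs₁ s₀ hs₀ hgt
    rw [sub_sub_cancel, add_comm (t * s₁), add_comm (sigmaCoeff Λ t _ * f s₁)] at this
    rwa [abs_of_pos (sub_pos.2 hgt)]

/-- Forward direction of the one-dimensional comparison: the differential
inequality `f'' + Λ f ≥ 0` on `(0,1)` implies `σ`-concavity of `f`. -/
theorem stmt_1 (Λ : ℝ) (hΛ : Λ < Real.pi ^ 2)
    (f f' f'' : ℝ → ℝ)
    (hf : ContinuousOn f (Set.Icc 0 1))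
    (hf' : ∀ t ∈ Set.Ioo (0 : ℝ) 1, HasDerivAt f (f' t) t)
    (hf'' : ∀ t ∈ Set.Ioo (0 : ℝ) 1, HasDerivAt f' (f'' t) t)
    (hf''cont : ContinuousOn f'' (Set.Ioo 0 1))
    (hfnonneg : ∀ t ∈ Set.Icc (0 : ℝ) 1, 0 ≤ f t)
    (hode : ∀ t ∈ Set.Ioo (0 : ℝ) 1, 0 ≤ f'' t + Λ * f t) :
    ∀ t ∈ Set.Icc (0 : ℝ) 1, ∀ s₀ ∈ Set.Icc (0 : ℝ) 1, ∀ s₁ ∈ Set.Icc (0 : ℝ) 1,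
      f ((1 - t) * s₀ + t * s₁) ≤
        sigmaCoeff Λ (1 - t) |s₀ - s₁| * f s₀ + sigmaCoeff Λ t |s₀ - s₁| * f s₁ :=
  stmt_1_general Λ hΛ f f' f'' hf hf' hf'' hode
end

section
/- Let Λ < π² be a real number and let f : [0,1] → ℝ be continuous on [0,1], twice continuously differentiable on (0,1), and nonnegative. Suppose that for all s₀, s₁ ∈ [0,1] one has the midpoint inequality f((s₀+s₁)/2) ≤ σ_Λ^{(1/2)}(|s₀−s₁|) (f(s₀) + f(s₁)). Then f''(t) + Λ f(t) ≥ 0 for every t ∈ (0,1). -/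
open Real Filter Topology Set

theorem IsLocalMin.nonneg_of_hasDerivAt_hasDerivAt {g g' : ℝ → ℝ} {x a : ℝ}
    (hmin : IsLocalMin g x) (hg : ∀ᶠ y in 𝓝 x, HasDerivAt g (g' y) y)
    (hg' : HasDerivAt g' a x) : 0 ≤ a := by
  by_contra! ha
  -- Subtracting `a/4 (y - x)²` keeps the second derivative negative, so `x` becomes a local
  -- maximum; together with the local minimum this forces `(y - x)² ≤ 0` near `x`.
  set k : ℝ → ℝ := fun y => g y - a / 4 * (y - x) ^ 2
  have hk : deriv k =ᶠ[𝓝 x] fun y => g' y - a / 2 * (y - x) := by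
    filter_upwards [hg] with y hy
    refine (hy.sub ((((hasDerivAt_id y).sub_const x).pow 2).const_mul (a / 4))).deriv.trans ?_
    simp only [id, Nat.cast_ofNat]
    ring
  have hk' : HasDerivAt (deriv k) (a / 2) x := by
    refine HasDerivAt.congr_of_eventuallyEq ?_ hk
    exact (hg'.sub (((hasDerivAt_id x).sub_const x).const_mul (a / 2))).congr_deriv (by ring)
  have hg'x : g' x = 0 := hmin.hasDerivAt_eq_zero hg.self_of_nhds
  have hkmax : IsLocalMax k x :=
    isLocalMax_of_deriv_deriv_neg (by rw [hk'.deriv]; linarith)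
      (by simp [hk.eq_of_nhds, hg'x]) (hg.self_of_nhds.continuousAt.sub (by fun_prop))
  have hx : ∀ᶠ y in 𝓝[≠] x, y = x := nhdsWithin_le_nhds <| by
    filter_upwards [hmin, hkmax] with y hgy hky
    simp only [k, sub_self] at hky
    have hsq : (y - x) ^ 2 = 0 := by nlinarith [sq_nonneg (y - x)]
    exact sub_eq_zero.1 (pow_eq_zero_iff two_ne_zero |>.1 hsq)
  obtain ⟨y, hyx, hne⟩ := (hx.and self_mem_nhdsWithin).exists
  exact hne hyx

theorem Real.one_add_sq_div_two_le_cosh (x : ℝ) : 1 + x ^ 2 / 2 ≤ cosh x := by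
  have := sum_le_hasSum (Finset.range 2) (fun n _ => by rw [pow_mul]; positivity) (hasSum_cosh x)
  simpa [Finset.sum_range_succ] using this

theorem sigmaCoeff_half_two_mul_le {Λ h : ℝ} (hh : 0 ≤ h) (hΛh : Λ * h ^ 2 < 1) :
    sigmaCoeff Λ (1 / 2) (2 * h) ≤ (2 - Λ * h ^ 2)⁻¹ := by
  have hpos : 0 < 2 - Λ * h ^ 2 := by linarith
  unfold sigmaCoeff
  split_ifs with h0 hΛ
  · have : Λ * h ^ 2 = 0 := by linarith
    norm_num [this]
  · have hΛ0 : 0 < Λ := pos_of_mul_pos_left hΛ (sq_nonneg _)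
    have hh0 : 0 < h := hh.lt_of_ne (by rintro rfl; simp at h0)
    set x := h * √Λ with hx
    have hx0 : 0 < x := by positivity
    have hx2 : x ^ 2 = Λ * h ^ 2 := by rw [hx, mul_pow, sq_sqrt hΛ0.le, mul_comm]
    have hx1 : x < 1 := by nlinarith
    have hsin : 0 < sin x := sin_pos_of_pos_of_lt_pi hx0 (by linarith [pi_gt_three])
    have hcos : 2 - Λ * h ^ 2 ≤ 2 * cos x := by linarith [one_sub_sq_div_two_le_cos (x := x)]
    rw [show 2 * h * √Λ = 2 * x by ring, show 1 / 2 * (2 * x) = x by ring, sin_two_mul,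
      show sin x / (2 * sin x * cos x) = (2 * cos x)⁻¹ by field_simp]
    exact inv_anti₀ hpos hcos
  · have hΛ0 : Λ < 0 := neg_of_mul_neg_left (lt_of_le_of_ne (not_lt.1 hΛ) h0) (sq_nonneg _)
    have hh0 : 0 < h := hh.lt_of_ne (by rintro rfl; simp at h0)
    set x := h * √(-Λ) with hx
    have hx0 : 0 < x := by have := Real.sqrt_pos.2 (neg_pos.2 hΛ0); positivity
    have hx2 : x ^ 2 = -(Λ * h ^ 2) := by
      rw [hx, mul_pow, sq_sqrt (by linarith), mul_comm]; ring
    have hsinh : 0 < sinh x := sinh_pos_iff.2 hx0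
    have hcosh : 2 - Λ * h ^ 2 ≤ 2 * cosh x := by linarith [one_add_sq_div_two_le_cosh x]
    rw [show 2 * h * √(-Λ) = 2 * x by ring, show 1 / 2 * (2 * x) = x by ring, sinh_two_mul,
      show sinh x / (2 * sinh x * cosh x) = (2 * cosh x)⁻¹ by field_simp]
    exact inv_anti₀ hpos hcosh

theorem stmt_2_general (Λ : ℝ)
    (f f' f'' : ℝ → ℝ)
    (hf' : ∀ t ∈ Set.Ioo (0 : ℝ) 1, HasDerivAt f (f' t) t)
    (hf'' : ∀ t ∈ Set.Ioo (0 : ℝ) 1, HasDerivAt f' (f'' t) t)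
    (hfnonneg : ∀ t ∈ Set.Icc (0 : ℝ) 1, 0 ≤ f t)
    (hmid : ∀ s₀ ∈ Set.Icc (0 : ℝ) 1, ∀ s₁ ∈ Set.Icc (0 : ℝ) 1,
      f ((s₀ + s₁) / 2) ≤ sigmaCoeff Λ (1 / 2) |s₀ - s₁| * (f s₀ + f s₁)) :
    ∀ t ∈ Set.Ioo (0 : ℝ) 1, 0 ≤ f'' t + Λ * f t := by
  intro t ht
  have hnear : ∀ᶠ h in 𝓝 (0 : ℝ), t + h ∈ Ioo 0 1 ∧ t - h ∈ Ioo 0 1 := by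
    have hIoo := isOpen_Ioo.mem_nhds ht
    exact
      (((continuous_const.add continuous_id).tendsto' (0 : ℝ) t (by simp)).eventually hIoo).and
        (((continuous_const.sub continuous_id).tendsto' (0 : ℝ) t (by simp)).eventually hIoo)
  set g : ℝ → ℝ := fun h => f (t + h) + f (t - h) - (2 - Λ * h ^ 2) * f t
  have hmin : IsLocalMin g 0 := by
    have hsmall : ∀ᶠ h in 𝓝 (0 : ℝ), Λ * h ^ 2 < 1 :=
      ((continuous_const.mul (continuous_pow 2)).tendsto' 0 0 (by simp)).eventually
        (eventually_lt_nhds one_pos)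
    filter_upwards [hnear, hsmall] with h ⟨hp, hm⟩ hΛh
    have hσ := sigmaCoeff_half_two_mul_le (abs_nonneg h) (by rwa [sq_abs])
    rw [sq_abs] at hσ
    have hsum : 0 ≤ f (t - h) + f (t + h) :=
      add_nonneg (hfnonneg _ (Ioo_subset_Icc_self hm)) (hfnonneg _ (Ioo_subset_Icc_self hp))
    have hft := hmid (t - h) (Ioo_subset_Icc_self hm) (t + h) (Ioo_subset_Icc_self hp)
    rw [show (t - h + (t + h)) / 2 = t by ring,
      show t - h - (t + h) = -(2 * h) by ring, abs_neg, abs_mul, abs_two] at hft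
    replace hft := hft.trans (mul_le_mul_of_nonneg_right hσ hsum)
    rw [inv_mul_eq_div, le_div_iff₀ (by linarith)] at hft
    simp only [g, add_zero, sub_zero]
    linarith
  have hg : ∀ᶠ h in 𝓝 (0 : ℝ), HasDerivAt g (f' (t + h) - f' (t - h) + 2 * Λ * h * f t) h := by
    filter_upwards [hnear] with h ⟨hp, hm⟩
    have hquad := (((hasDerivAt_pow 2 h).const_mul Λ).const_sub 2).mul_const (f t)
    exact ((((hf' _ hp).comp_const_add t h).add ((hf' _ hm).comp_const_sub t h)).sub
      hquad).congr_deriv (by push_cast; ring)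
  have hg' : HasDerivAt (fun h => f' (t + h) - f' (t - h) + 2 * Λ * h * f t)
      (2 * (f'' t + Λ * f t)) 0 := by
    have ht0 : t + 0 ∈ Ioo 0 1 ∧ t - 0 ∈ Ioo 0 1 := by simpa using ht
    have hlin := ((hasDerivAt_id (0 : ℝ)).const_mul (2 * Λ)).mul_const (f t)
    exact ((((hf'' _ ht0.1).comp_const_add t 0).sub ((hf'' _ ht0.2).comp_const_sub t 0)).add
      hlin).congr_deriv (by simp only [add_zero, sub_zero]; ring)
  linarith [hmin.nonneg_of_hasDerivAt_hasDerivAt hg hg']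

/-- Backward direction: the midpoint `σ`-concavity inequality implies the
differential inequality `f'' + Λ f ≥ 0` on `(0,1)`. -/
theorem stmt_2 (Λ : ℝ) (hΛ : Λ < Real.pi ^ 2)
    (f f' f'' : ℝ → ℝ)
    (hf : ContinuousOn f (Set.Icc 0 1))
    (hf' : ∀ t ∈ Set.Ioo (0 : ℝ) 1, HasDerivAt f (f' t) t)
    (hf'' : ∀ t ∈ Set.Ioo (0 : ℝ) 1, HasDerivAt f' (f'' t) t)
    (hf''cont : ContinuousOn f'' (Set.Ioo 0 1))
    (hfnonneg : ∀ t ∈ Set.Icc (0 : ℝ) 1, 0 ≤ f t)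
    (hmid : ∀ s₀ ∈ Set.Icc (0 : ℝ) 1, ∀ s₁ ∈ Set.Icc (0 : ℝ) 1,
      f ((s₀ + s₁) / 2) ≤ sigmaCoeff Λ (1 / 2) |s₀ - s₁| * (f s₀ + f s₁)) :
    ∀ t ∈ Set.Ioo (0 : ℝ) 1, 0 ≤ f'' t + Λ * f t :=
  stmt_2_general Λ f f' f'' hf' hf'' hfnonneg hmid
end

section
/- Fix K ∈ ℝ, N > 1, δ > 0 and t ∈ [0,1]. Then, as λ → 0⁺, one has τ_{K−δ,N}^{(t)}(λ) = τ_{K,N}^{(t)}(λ) − t(1−t²)(δ/(6N))λ² + o(λ²); that is, (τ_{K−δ,N}^{(t)}(λ) − τ_{K,N}^{(t)}(λ) + t(1−t²)(δ/(6N))λ²)/λ² → 0 as λ → 0⁺. -/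
/-- Distortion coefficient `τ_{K,N}^{(t)}(θ) = t^{1/N} (σ_{K/(N-1)}^{(t)}(θ))^{1-1/N}`. -/
noncomputable def tauCoeff (K N t θ : ℝ) : ℝ :=
  t ^ (1 / N) * (sigmaCoeff (K / (N - 1)) t θ) ^ (1 - 1 / N)

open Real Filter Topology Asymptotics

lemma tendsto_mul_const_nhdsNE_zero {M₀ : Type*} [MulZeroClass M₀] [NoZeroDivisors M₀]
    [TopologicalSpace M₀] [ContinuousMul M₀] {c : M₀} (hc : c ≠ 0) :
    Tendsto (fun x => x * c) (𝓝[≠] 0) (𝓝[≠] 0) :=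
  tendsto_nhdsWithin_of_tendsto_nhds_of_eventually_within _
    (by simpa using ((continuous_mul_const c).tendsto 0).mono_left nhdsWithin_le_nhds)
    (eventually_nhdsWithin_of_forall fun _ hx => mul_ne_zero hx hc)

lemma Real.sinh_bound {x : ℝ} (hx : |x| ≤ 1) : |sinh x - (x + x ^ 3 / 6)| ≤ |x| ^ 5 / 100 := by
  have h := Complex.sin_bound (x := x * Complex.I) (by simpa using hx)
  rw [Complex.sin_mul_I, ← Complex.ofReal_sinh] at h
  have e : (sinh x : ℂ) * Complex.I - (x * Complex.I - (x * Complex.I) ^ 3 / 6)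
      = ((sinh x - (x + x ^ 3 / 6) : ℝ) : ℂ) * Complex.I := by
    push_cast; ring_nf; rw [Complex.I_pow_three]; ring
  rwa [e, norm_mul, Complex.norm_I, mul_one, Complex.norm_real, Real.norm_eq_abs, norm_mul,
    Complex.norm_I, mul_one, Complex.norm_real, Real.norm_eq_abs] at h

lemma tendsto_sub_div_cube_of_abs_le {g : ℝ → ℝ} {c : ℝ}
    (hg : ∀ x, |x| ≤ 1 → |g x - (x + c * x ^ 3)| ≤ |x| ^ 5 / 100) :
    Tendsto (fun x => (g x - x) / x ^ 3) (𝓝[≠] 0) (𝓝 c) := by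
  rw [tendsto_iff_norm_sub_tendsto_zero]
  have hsq : Tendsto (fun x : ℝ => |x| ^ 2 / 100) (𝓝[≠] 0) (𝓝 0) := by
    have : Continuous fun x : ℝ => |x| ^ 2 / 100 := by fun_prop
    simpa using (this.tendsto 0).mono_left nhdsWithin_le_nhds
  refine squeeze_zero' (Eventually.of_forall fun _ => norm_nonneg _) ?_ hsq
  filter_upwards [self_mem_nhdsWithin,
    nhdsWithin_le_nhds (Metric.closedBall_mem_nhds (0 : ℝ) one_pos)] with x (hx0 : x ≠ 0) hx1
  rw [Metric.mem_closedBall, dist_zero_right, Real.norm_eq_abs] at hx1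
  have hx3 : 0 < |x| ^ 3 := by positivity
  have e : (g x - x) / x ^ 3 - c = (g x - (x + c * x ^ 3)) / x ^ 3 := by field_simp; ring
  rw [Real.norm_eq_abs, e, abs_div, abs_pow, div_le_iff₀ hx3]
  calc |g x - (x + c * x ^ 3)| ≤ |x| ^ 5 / 100 := hg x hx1
    _ = |x| ^ 2 / 100 * |x| ^ 3 := by ring

lemma tendsto_comp_mul_div_sub_div_sq {g : ℝ → ℝ} {c : ℝ} (hg0 : g 0 = 0)
    (hg : Tendsto (fun x => (g x - x) / x ^ 3) (𝓝[≠] 0) (𝓝 c)) (t : ℝ) :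
    Tendsto (fun x => (g (t * x) / g x - t) / x ^ 2) (𝓝[≠] 0) (𝓝 (c * (t ^ 3 - t))) := by
  have hsq : Tendsto (fun x : ℝ => x ^ 2) (𝓝[≠] 0) (𝓝 0) :=
    tendsto_nhdsWithin_of_tendsto_nhds ((continuous_pow 2).tendsto' 0 0 (zero_pow two_ne_zero))
  have hlin : Tendsto (fun x => g x / x) (𝓝[≠] 0) (𝓝 1) := by
    have := (hsq.mul hg).const_add 1
    rw [zero_mul, add_zero] at this
    refine this.congr' (eventually_nhdsWithin_of_forall fun x (hx : x ≠ 0) => ?_)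
    field_simp; ring
  have hnum : Tendsto (fun x => (g (t * x) - t * g x) / x ^ 3) (𝓝[≠] 0)
      (𝓝 (c * (t ^ 3 - t))) := by
    rcases eq_or_ne t 0 with rfl | ht
    · simp [hg0]
    have hmul : Tendsto (fun x => t * x) (𝓝[≠] 0) (𝓝[≠] 0) := by
      simpa only [mul_comm] using tendsto_mul_const_nhdsNE_zero ht
    have := ((hg.comp hmul).const_mul (t ^ 3)).sub (hg.const_mul t)
    rw [show c * (t ^ 3 - t) = t ^ 3 * c - t * c by ring]
    refine this.congr' (eventually_nhdsWithin_of_forall fun x (hx : x ≠ 0) => ?_)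
    simp only [Function.comp_apply]
    field_simp
    ring
  have := hnum.div hlin one_ne_zero
  rw [div_one] at this
  refine this.congr' ?_
  filter_upwards [self_mem_nhdsWithin, hlin.eventually_ne one_ne_zero] with x (hx : x ≠ 0) hgx
  have : g x ≠ 0 := fun h => hgx (by simp [h])
  simp only [Pi.div_apply]
  field_simp

lemma tendsto_comp_mul_mul_div_sub_div_sq {g : ℝ → ℝ} {c : ℝ} (hg0 : g 0 = 0)
    (hg : Tendsto (fun x => (g x - x) / x ^ 3) (𝓝[≠] 0) (𝓝 c)) (t : ℝ) {s : ℝ} (hs : s ≠ 0) :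
    Tendsto (fun l => (g (t * (l * s)) / g (l * s) - t) / l ^ 2) (𝓝[≠] 0)
      (𝓝 (c * (t ^ 3 - t) * s ^ 2)) := by
  refine (((tendsto_comp_mul_div_sub_div_sq hg0 hg t).comp
    (tendsto_mul_const_nhdsNE_zero hs)).mul_const (s ^ 2)).congr' ?_
  filter_upwards [self_mem_nhdsWithin] with l (hl : l ≠ 0)
  simp only [Function.comp_apply]
  field_simp

theorem HasDerivAt.tendsto_comp_sub_div {φ : ℝ → ℝ} {φ' a L : ℝ} {α : Type*} {l : Filter α}
    {f r : α → ℝ} (hφ : HasDerivAt φ φ' a) (hf : Tendsto (fun x => (f x - a) / r x) l (𝓝 L))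
    (hr : Tendsto r l (𝓝 0)) (hr0 : ∀ᶠ x in l, r x ≠ 0) :
    Tendsto (fun x => (φ (f x) - φ a) / r x) l (𝓝 (φ' * L)) := by
  have hO : (fun x => f x - a) =O[l] r :=
    isBigO_of_div_tendsto_nhds (hr0.mono fun x hx h => absurd h hx) L hf
  have hfa : Tendsto f l (𝓝 a) := tendsto_sub_nhds_zero_iff.mp (hO.trans_tendsto hr)
  have ho := (hφ.isLittleO.comp_tendsto hfa).trans_isBigO hO
  have := ho.tendsto_div_nhds_zero.add (hf.const_mul φ')
  rw [zero_add] at this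
  refine this.congr' (hr0.mono fun x hx => ?_)
  simp only [Function.comp_apply, smul_eq_mul]
  field_simp
  ring

lemma tendsto_sigmaCoeff_sub_div_sq (Λ t : ℝ) :
    Tendsto (fun l => (sigmaCoeff Λ t l - t) / l ^ 2) (𝓝[≠] 0)
      (𝓝 (t * (1 - t ^ 2) * Λ / 6)) := by
  rcases lt_trichotomy Λ 0 with hΛ | rfl | hΛ
  · have hs : sqrt (-Λ) ≠ 0 := (sqrt_pos.mpr (neg_pos.mpr hΛ)).ne'
    have h := tendsto_comp_mul_mul_div_sub_div_sq sinh_zero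
      (tendsto_sub_div_cube_of_abs_le (c := 1 / 6) fun x hx => by
        simpa [div_eq_mul_inv, mul_comm] using Real.sinh_bound hx) t hs
    rw [sq_sqrt (neg_nonneg.mpr hΛ.le),
      show 1 / 6 * (t ^ 3 - t) * -Λ = t * (1 - t ^ 2) * Λ / 6 by ring] at h
    refine h.congr' (eventually_nhdsWithin_of_forall fun l (hl : l ≠ 0) => ?_)
    have hneg : Λ * l ^ 2 < 0 := mul_neg_of_neg_of_pos hΛ (by positivity)
    dsimp only
    rw [sigmaCoeff, if_neg hneg.ne, if_neg hneg.not_gt]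
  · simp [sigmaCoeff]
  · have hs : sqrt Λ ≠ 0 := (sqrt_pos.mpr hΛ).ne'
    have h := tendsto_comp_mul_mul_div_sub_div_sq sin_zero
      (tendsto_sub_div_cube_of_abs_le (c := -(1 / 6)) fun x hx => by
        simpa [div_eq_mul_inv, mul_comm, sub_eq_add_neg] using Real.sin_bound hx) t hs
    rw [sq_sqrt hΛ.le, show -(1 / 6) * (t ^ 3 - t) * Λ = t * (1 - t ^ 2) * Λ / 6 by ring] at h
    refine h.congr' (eventually_nhdsWithin_of_forall fun l (hl : l ≠ 0) => ?_)
    have hpos : 0 < Λ * l ^ 2 := by positivity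
    dsimp only
    rw [sigmaCoeff, if_neg hpos.ne', if_pos hpos]

lemma tendsto_tauCoeff_sub_div_sq (K : ℝ) {N t : ℝ} (hN : 1 < N) (ht : 0 ≤ t) :
    Tendsto (fun l => (tauCoeff K N t l - t) / l ^ 2) (𝓝[≠] 0)
      (𝓝 (t * (1 - t ^ 2) * K / (6 * N))) := by
  have hN0 : N ≠ 0 := by positivity
  rcases ht.eq_or_lt with rfl | ht
  · simp [tauCoeff, zero_rpow (inv_ne_zero hN0)]
  have hsq : Tendsto (fun l : ℝ => l ^ 2) (𝓝[≠] 0) (𝓝 0) :=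
    tendsto_nhdsWithin_of_tendsto_nhds ((continuous_pow 2).tendsto' 0 0 (zero_pow two_ne_zero))
  have h := ((hasDerivAt_rpow_const (p := 1 - 1 / N) (Or.inl ht.ne')).tendsto_comp_sub_div
    (tendsto_sigmaCoeff_sub_div_sq (K / (N - 1)) t) hsq
    (eventually_nhdsWithin_of_forall fun l (hl : l ≠ 0) => pow_ne_zero 2 hl)).const_mul
    (t ^ (1 / N))
  have hsplit : t ^ (1 / N) * t ^ (1 - 1 / N) = t := by
    rw [← rpow_add ht, add_sub_cancel, rpow_one]
  have hcancel : t ^ (1 / N) * t ^ (1 - 1 / N - 1) = 1 := by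
    rw [← rpow_add ht, show 1 / N + (1 - 1 / N - 1) = 0 by ring, rpow_zero]
  have hN1 : N - 1 ≠ 0 := sub_ne_zero.mpr hN.ne'
  convert h using 2 with l
  · rw [tauCoeff, mul_div_assoc', mul_sub, hsplit]
  · calc t * (1 - t ^ 2) * K / (6 * N)
        = t ^ (1 / N) * t ^ (1 - 1 / N - 1) * ((1 - 1 / N) * (K / (N - 1)))
            * (t * (1 - t ^ 2)) / 6 := by
          rw [hcancel]; field_simp
      _ = _ := by ring

theorem stmt_6_general (K N δ t : ℝ) (hN : 1 < N) (ht : t ∈ Set.Icc (0 : ℝ) 1) :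
    Filter.Tendsto
      (fun l : ℝ =>
        (tauCoeff (K - δ) N t l - tauCoeff K N t l
          + t * (1 - t ^ 2) * (δ / (6 * N)) * l ^ 2) / l ^ 2)
      (nhdsWithin 0 (Set.Ioi 0)) (nhds 0) := by
  have h := ((tendsto_tauCoeff_sub_div_sq (K - δ) hN ht.1).sub
    (tendsto_tauCoeff_sub_div_sq K hN ht.1)).add_const (t * (1 - t ^ 2) * (δ / (6 * N)))
  rw [show t * (1 - t ^ 2) * (K - δ) / (6 * N) - t * (1 - t ^ 2) * K / (6 * N)
    + t * (1 - t ^ 2) * (δ / (6 * N)) = 0 by ring] at h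
  refine (h.mono_left (nhdsWithin_mono 0 fun x hx => ne_of_gt hx)).congr'
    (eventually_nhdsWithin_of_forall fun l (hl : 0 < l) => ?_)
  field_simp
  ring

/-- Expansion of the difference of distortion coefficients:
`τ_{K-δ,N}^{(t)}(λ) = τ_{K,N}^{(t)}(λ) - t(1-t²)(δ/(6N))λ² + o(λ²)` as `λ → 0⁺`. -/
theorem stmt_6 (K N δ t : ℝ) (hN : 1 < N) (hδ : 0 < δ) (ht : t ∈ Set.Icc (0 : ℝ) 1) :
    Filter.Tendsto
      (fun l : ℝ =>
        (tauCoeff (K - δ) N t l - tauCoeff K N t l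
          + t * (1 - t ^ 2) * (δ / (6 * N)) * l ^ 2) / l ^ 2)
      (nhdsWithin 0 (Set.Ioi 0)) (nhds 0) :=
  stmt_6_general K N δ t hN ht
end
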